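/- Let b be a prime, m ≥ 1, and let P_n = (V_0,…,V_{b^m−1}) be the digital net in base b with generating matrices C_1,…,C_s ∈ F_b^{m×m}, each of which is nonsingular (equivalently, each one-dimensional projection of P_n is a (0,m,1)-net in base b). Then C_b(k;P_n) ≤ 1 for every k ∈ ℕ^s if and only if P_n is a (0,m,s)-net in base b, i.e., if and only if P_n is k-equidistributed in base b for every k ∈ ℕ^s with |k| ≤ m. (This is the combinatorial core of the paper's main theorem: a scrambled digital (t,m,s)-net is NLOD/NUOD if and only if t = 0.) -/

import Mathlib

open MeasureTheory
open scoped Classical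

noncomputable def gammaB (b : ℕ) (x y : ℝ) : ℕ∞ :=
  if x = y then ⊤
  else (↑(sInf {i : ℕ | ⌊(b : ℝ) ^ i * x⌋ = ⌊(b : ℝ) ^ i * y⌋ ∧
      ⌊(b : ℝ) ^ (i + 1) * x⌋ ≠ ⌊(b : ℝ) ^ (i + 1) * y⌋}) : ℕ∞)

noncomputable def mB {n s : ℕ} (b : ℕ) (P : Fin n → Fin s → ℝ) (k : Fin s → ℕ) (l : Fin n) : ℕ :=
  (Finset.univ.filter fun j : Fin n =>
    j ≠ l ∧ ∀ r : Fin s, (k r : ℕ∞) ≤ gammaB b (P l r) (P j r)).card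

noncomputable def nB {n s : ℕ} (b : ℕ) (P : Fin n → Fin s → ℝ) (i : Fin s → ℕ) (l : Fin n) : ℕ :=
  (Finset.univ.filter fun j : Fin n =>
    j ≠ l ∧ ∀ r : Fin s, gammaB b (P l r) (P j r) = (i r : ℕ∞)).card

noncomputable def MB {n s : ℕ} (b : ℕ) (P : Fin n → Fin s → ℝ) (k : Fin s → ℕ) : ℕ :=
  ∑ l : Fin n, mB b P k l

noncomputable def NB {n s : ℕ} (b : ℕ) (P : Fin n → Fin s → ℝ) (i : Fin s → ℕ) : ℕ :=
  ∑ l : Fin n, nB b P i l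

noncomputable def CB {n s : ℕ} (b : ℕ) (P : Fin n → Fin s → ℝ) (k : Fin s → ℕ) : ℝ :=
  (b : ℝ) ^ (∑ j, k j) * (MB b P k : ℝ) / ((n : ℝ) * ((n : ℝ) - 1))

def ElemInterval (b s : ℕ) (k a : Fin s → ℕ) : Set (Fin s → ℝ) :=
  {x | ∀ j : Fin s, (a j : ℝ) / (b : ℝ) ^ k j ≤ x j ∧ x j < ((a j : ℝ) + 1) / (b : ℝ) ^ k j}

def kEquidistributed (b m : ℕ) {n s : ℕ} (P : Fin n → Fin s → ℝ) (k : Fin s → ℕ) : Prop :=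
  ∀ a : Fin s → ℕ, (∀ j, a j < b ^ k j) →
    (Finset.univ.filter fun i : Fin n => P i ∈ ElemInterval b s k a).card = b ^ (m - ∑ j, k j)

noncomputable def digitalNet (b m s : ℕ) (C : Fin s → Matrix (Fin m) (Fin m) (ZMod b)) :
    Fin (b ^ m) → Fin s → ℝ :=
  fun i ℓ => ∑ r : Fin m,
    ((((C ℓ).mulVec fun p : Fin m => ((((i : ℕ) / b ^ (p : ℕ)) % b : ℕ) : ZMod b)) r).val : ℝ) /
      (b : ℝ) ^ ((r : ℕ) + 1)

noncomputable def stackRank (b m s : ℕ) (C : Fin s → Matrix (Fin m) (Fin m) (ZMod b))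
    (k : Fin s → ℕ) (hk : ∀ j, k j ≤ m) : ℕ :=
  (Matrix.of fun (x : (j : Fin s) × Fin (k j)) (p : Fin m) =>
    C x.1 ⟨(x.2 : ℕ), lt_of_lt_of_le x.2.2 (hk x.1)⟩ p).rank

/-! The `j`-th coordinate of the point with digit vector `x` has base-`b` digits `C j *ᵥ x`, so
two points lie in the same elementary `k`-interval exactly when the matrix
`A_k = stackMatrix C k` stacking the first `k j` rows of every `C j` takes the same value on their
digit vectors. Hence every nonempty elementary `k`-interval holds `b ^ (m - rank A_k)` points.
This gives both `M_b(k) = b^m (b^(m - rank A_k) - 1)`, so that `C_b(k) ≤ 1` becomes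
`min(|k|, m) ≤ rank A_k`, and `k`-equidistribution ⇔ `|k| ≤ rank A_k` for `|k| ≤ m`. The two
conditions are then equivalent because `rank A_k` is monotone in `k`. -/

open Finset Matrix

section Digits

def digitPrefix (b : ℕ) (d : ℕ → ℕ) : ℕ → ℕ
  | 0 => 0
  | t + 1 => b * digitPrefix b d t + d t

variable {b : ℕ} {d e : ℕ → ℕ}

lemma digitPrefix_lt (hd : ∀ r, d r < b) (t : ℕ) : digitPrefix b d t < b ^ t := by
  induction t with
  | zero => simp [digitPrefix]
  | succ t ih =>
    calc b * digitPrefix b d t + d t < b * digitPrefix b d t + b := by linarith [hd t]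
      _ = b * (digitPrefix b d t + 1) := by ring
      _ ≤ b ^ (t + 1) := by rw [pow_succ']; exact Nat.mul_le_mul_left b ih

lemma digitPrefix_add_div_pow (hd : ∀ r, d r < b) (t j : ℕ) :
    digitPrefix b d (t + j) / b ^ j = digitPrefix b d t := by
  have hb : 0 < b := (Nat.zero_le _).trans_lt (hd 0)
  induction j with
  | zero => simp
  | succ j ih =>
    rw [← add_assoc, digitPrefix, pow_succ', ← Nat.div_div_eq_div_mul, Nat.mul_add_div hb,
      Nat.div_eq_of_lt (hd _), add_zero, ih]

lemma digitPrefix_eq_iff (hd : ∀ r, d r < b) (he : ∀ r, e r < b) (t : ℕ) :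
    digitPrefix b d t = digitPrefix b e t ↔ ∀ r < t, d r = e r := by
  have hb : 0 < b := (Nat.zero_le _).trans_lt (hd 0)
  induction t with
  | zero => simp [digitPrefix]
  | succ t ih =>
    have hdiv (f : ℕ → ℕ) (hf : ∀ r, f r < b) :
        (b * digitPrefix b f t + f t) / b = digitPrefix b f t := by
      rw [Nat.mul_add_div hb, Nat.div_eq_of_lt (hf t), add_zero]
    have hmod (f : ℕ → ℕ) (hf : ∀ r, f r < b) : (b * digitPrefix b f t + f t) % b = f t := by
      rw [Nat.mul_add_mod, Nat.mod_eq_of_lt (hf t)]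
    simp only [digitPrefix, Nat.lt_succ_iff_lt_or_eq, or_imp, forall_and, forall_eq, ← ih]
    constructor
    · intro h
      exact ⟨by rw [← hdiv d hd, h, hdiv e he], by rw [← hmod d hd, h, hmod e he]⟩
    · rintro ⟨h, ht⟩
      rw [h, ht]

lemma pow_mul_sum_range_digits (hb : b ≠ 0) (d : ℕ → ℕ) (N : ℕ) :
    (b : ℝ) ^ N * ∑ r ∈ range N, (d r : ℝ) / (b : ℝ) ^ (r + 1) = digitPrefix b d N := by
  induction N with
  | zero => simp [digitPrefix]
  | succ N ih =>
    have hb' : (b : ℝ) ≠ 0 := by exact_mod_cast hb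
    rw [sum_range_succ, mul_add, pow_succ', mul_assoc, ih, digitPrefix]
    field_simp
    push_cast
    ring

end Digits

section DigitValue

variable {b m : ℕ}

noncomputable def digitValue (y : Fin m → ZMod b) : ℝ :=
  ∑ r : Fin m, ((y r).val : ℝ) / (b : ℝ) ^ ((r : ℕ) + 1)

def digitSeq (y : Fin m → ZMod b) (r : ℕ) : ℕ :=
  if h : r < m then (y ⟨r, h⟩).val else 0

lemma digitValue_nonneg (y : Fin m → ZMod b) : 0 ≤ digitValue y := by
  unfold digitValue; positivity

variable [NeZero b]

lemma digitSeq_lt (y : Fin m → ZMod b) (r : ℕ) : digitSeq y r < b := by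
  unfold digitSeq
  split
  · exact ZMod.val_lt _
  · exact Nat.pos_of_neZero b

lemma digitSeq_eq_iff (y y' : Fin m → ZMod b) (t : ℕ) :
    (∀ r < t, digitSeq y r = digitSeq y' r) ↔ ∀ r : Fin m, (r : ℕ) < t → y r = y' r := by
  constructor
  · intro h r hr
    have := h r hr
    simp only [digitSeq, r.isLt, dif_pos] at this
    exact ZMod.val_injective b this
  · intro h r hr
    unfold digitSeq
    split
    · rw [h _ hr]
    · rfl

lemma floor_pow_mul_digitValue (y : Fin m → ZMod b) (t : ℕ) :
    ⌊(b : ℝ) ^ t * digitValue y⌋₊ = digitPrefix b (digitSeq y) t := by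
  have hb : (b : ℝ) ≠ 0 := by exact_mod_cast NeZero.ne b
  have hsum :
      digitValue y = ∑ r ∈ range (t + m), (digitSeq y r : ℝ) / (b : ℝ) ^ (r + 1) := by
    rw [← sum_subset (range_mono (Nat.le_add_left m t))
      (fun r _ hr => by simp [digitSeq, mem_range.not.mp hr]), ← Fin.sum_univ_eq_sum_range]
    simp [digitValue, digitSeq]
  have hscale :
      (b : ℝ) ^ t * digitValue y = (digitPrefix b (digitSeq y) (t + m) : ℝ) / (b : ℕ) ^ m := by
    rw [← pow_mul_sum_range_digits (NeZero.ne b), ← hsum, pow_add]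
    field_simp
  rw [hscale, ← Nat.cast_pow, Nat.floor_div_eq_div, digitPrefix_add_div_pow (digitSeq_lt y)]

lemma floor_pow_mul_digitValue_eq_iff (y y' : Fin m → ZMod b) (t : ℕ) :
    ⌊(b : ℝ) ^ t * digitValue y⌋₊ = ⌊(b : ℝ) ^ t * digitValue y'⌋₊ ↔
      ∀ r : Fin m, (r : ℕ) < t → y r = y' r := by
  rw [floor_pow_mul_digitValue, floor_pow_mul_digitValue,
    digitPrefix_eq_iff (digitSeq_lt y) (digitSeq_lt y'), digitSeq_eq_iff]

lemma intFloor_pow_mul_digitValue_eq_iff (y y' : Fin m → ZMod b) (t : ℕ) :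
    ⌊(b : ℝ) ^ t * digitValue y⌋ = ⌊(b : ℝ) ^ t * digitValue y'⌋ ↔
      ∀ r : Fin m, (r : ℕ) < t → y r = y' r := by
  rw [← floor_pow_mul_digitValue_eq_iff,
    ← Int.natCast_floor_eq_floor (by positivity [digitValue_nonneg y]),
    ← Int.natCast_floor_eq_floor (by positivity [digitValue_nonneg y']), Nat.cast_inj]

end DigitValue

lemma le_sInf_setOf_and_not_succ_iff {P : ℕ → Prop} (hP : Antitone P) (h0 : P 0)
    (hfin : ∃ n, ¬ P n) (k : ℕ) : k ≤ sInf {i | P i ∧ ¬ P (i + 1)} ↔ P k := by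
  classical
  set n := Nat.find hfin
  have hPn (i : ℕ) : P i ↔ i < n :=
    ⟨fun hi => not_le.mp fun hni => Nat.find_spec hfin (hP hni hi),
      fun hi => not_not.mp (Nat.find_min hfin hi)⟩
  have hn : 0 < n := (hPn 0).mp h0
  have hS : {i | P i ∧ ¬ P (i + 1)} = {n - 1} := by
    ext i
    simp only [Set.mem_ofPred_eq, Set.mem_singleton_iff, hPn]
    omega
  rw [hS, csInf_singleton, hPn]
  omega

theorem le_gammaB_iff {b : ℕ} (hb : 2 ≤ b) {x y : ℝ} (h0 : ⌊x⌋ = ⌊y⌋) (k : ℕ) :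
    (k : ℕ∞) ≤ gammaB b x y ↔ ⌊(b : ℝ) ^ k * x⌋ = ⌊(b : ℝ) ^ k * y⌋ := by
  by_cases hxy : x = y
  · simp [gammaB, hxy]
  rw [gammaB, if_neg hxy, Nat.cast_le]
  refine le_sInf_setOf_and_not_succ_iff (antitone_nat_of_succ_le fun i h => ?_) (by simpa) ?_ k
  · have hdiv (z : ℝ) : (b : ℝ) ^ i * z = (b : ℝ) ^ (i + 1) * z / b := by
      field_simp; ring
    rw [hdiv x, hdiv y, Int.floor_div_natCast, Int.floor_div_natCast, h]
  · have hb1 : (1 : ℝ) < b := by exact_mod_cast hb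
    obtain ⟨n, hn⟩ := pow_unbounded_of_one_lt |x - y|⁻¹ hb1
    refine ⟨n, fun h => (Int.abs_sub_lt_one_of_floor_eq_floor h).not_ge ?_⟩
    have hxy' : 0 < |x - y| := abs_pos.mpr (sub_ne_zero.mpr hxy)
    rw [← mul_sub, abs_mul, abs_of_pos (by positivity)]
    calc (1 : ℝ) = |x - y|⁻¹ * |x - y| := (inv_mul_cancel₀ hxy'.ne').symm
      _ ≤ (b : ℝ) ^ n * |x - y| := by gcongr

section Stack

variable {R : Type*} [Field R] {m s : ℕ} {ι : Type*}

/-- The rows of the `C j` that determine the first `k j` digits of the coordinates; a row index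
`t ≥ m` (a digit beyond the precision of the net) gives a zero row. -/
def stackMatrix (C : Fin s → Matrix (Fin m) ι R) (k : Fin s → ℕ) :
    Matrix ((j : Fin s) × Fin (k j)) ι R :=
  Matrix.of fun q p => if h : (q.2 : ℕ) < m then C q.1 ⟨q.2, h⟩ p else 0

lemma stackMatrix_mulVec_eq_iff [Fintype ι] (C : Fin s → Matrix (Fin m) ι R) (k : Fin s → ℕ)
    (x x' : ι → R) :
    stackMatrix C k *ᵥ x = stackMatrix C k *ᵥ x' ↔
      ∀ j, ∀ r : Fin m, (r : ℕ) < k j → (C j *ᵥ x) r = (C j *ᵥ x') r := by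
  simp only [funext_iff, Sigma.forall]
  refine ⟨fun h j r hr => ?_, fun h j t => ?_⟩
  · simpa [stackMatrix, Matrix.mulVec, dotProduct] using h j ⟨r, hr⟩
  · by_cases ht : (t : ℕ) < m
    · simpa [stackMatrix, Matrix.mulVec, dotProduct, ht] using h j ⟨t, ht⟩ t.isLt
    · simp [stackMatrix, Matrix.mulVec, dotProduct, ht]

lemma rank_stackMatrix_mono [Fintype ι] (C : Fin s → Matrix (Fin m) ι R) {k k' : Fin s → ℕ}
    (h : k' ≤ k) : (stackMatrix C k').rank ≤ (stackMatrix C k).rank := by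
  have hsub : stackMatrix C k' =
      (stackMatrix C k).submatrix (fun q => ⟨q.1, Fin.castLE (h q.1) q.2⟩) id := rfl
  rw [hsub]
  exact Matrix.rank_submatrix_le _ _ _

lemma card_mulVec_eq_mulVec {κ : Type*} [Fintype κ] [DecidableEq κ] [Fintype R] [DecidableEq R]
    (A : Matrix ι κ R) (x₀ : κ → R) :
    #{x | A *ᵥ x = A *ᵥ x₀} = Fintype.card R ^ (Fintype.card κ - A.rank) := by
  have hfiber : #{x | A *ᵥ x = A *ᵥ x₀} = #{x | A *ᵥ x = 0} := by
    convert AddMonoidHom.card_fiber_eq_of_mem_range A.mulVecLin (Set.mem_range_self x₀)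
      ⟨0, map_zero _⟩ <;> rfl
  have hker : #{x | A *ᵥ x = 0} = Fintype.card (LinearMap.ker A.mulVecLin) := by
    rw [Fintype.card_subtype]; rfl
  have hnullity := LinearMap.finrank_range_add_finrank_ker A.mulVecLin
  rw [Module.finrank_fintype_fun_eq_card] at hnullity
  rw [hfiber, hker, Module.card_eq_pow_finrank (K := R), Matrix.rank, ← hnullity,
    Nat.add_sub_cancel_left]

end Stack

lemma pow_mul_pow_sub_sub_one_le_pow_sub_one_iff {b K m ρ : ℕ} (hb : 2 ≤ b) (hρ : ρ ≤ m) :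
    b ^ K * (b ^ (m - ρ) - 1) ≤ b ^ m - 1 ↔ min K m ≤ ρ := by
  have hpos (n : ℕ) : 1 ≤ b ^ n := Nat.one_le_pow _ _ (by omega)
  constructor
  · intro h
    by_contra! hlt
    have hρK : ρ + 1 ≤ K := by omega
    have hstep : b ^ (m - ρ - 1) ≤ b ^ (m - ρ) - 1 := by
      have hsplit : b ^ (m - ρ) = b * b ^ (m - ρ - 1) := by rw [← pow_succ']; congr 1; omega
      have := hpos (m - ρ - 1)
      have := Nat.mul_le_mul_right (b ^ (m - ρ - 1)) hb
      omega
    have : b ^ m ≤ b ^ K * (b ^ (m - ρ) - 1) :=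
      calc b ^ m = b ^ (ρ + 1) * b ^ (m - ρ - 1) := by rw [← pow_add]; congr 1; omega
        _ ≤ b ^ K * (b ^ (m - ρ) - 1) :=
          Nat.mul_le_mul (Nat.pow_le_pow_right (by omega) hρK) hstep
    have := hpos m
    omega
  · intro h
    rcases le_total K m with hKm | hmK
    · rw [min_eq_left hKm] at h
      calc b ^ K * (b ^ (m - ρ) - 1) ≤ b ^ K * (b ^ (m - K) - 1) := by
            gcongr; omega
        _ = b ^ m - b ^ K := by rw [Nat.mul_sub_one, ← pow_add, Nat.add_sub_cancel' hKm]
        _ ≤ b ^ m - 1 := Nat.sub_le_sub_left (hpos K) _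
    · rw [min_eq_right hmK] at h
      simp [show m - ρ = 0 by omega]

lemma exists_le_sum_eq {s : ℕ} (k : Fin s → ℕ) {t : ℕ} (ht : t ≤ ∑ j, k j) :
    ∃ k' ≤ k, ∑ j, k' j = t := by
  induction t with
  | zero => exact ⟨0, fun _ => Nat.zero_le _, by simp⟩
  | succ t ih =>
    obtain ⟨k', hk'k, hk't⟩ := ih (by omega)
    obtain ⟨j, -, hj⟩ := Finset.exists_lt_of_sum_lt (s := univ) (hk't.trans_lt ht)
    refine ⟨k' + Pi.single j 1, fun i => ?_, ?_⟩
    · rcases eq_or_ne i j with rfl | hij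
      · simpa using hj
      · simpa [hij] using hk'k i
    · simp [sum_add_distrib, hk't]

section DigitalNet

variable {b m s : ℕ} [Fact b.Prime]

def digitVector (i : Fin (b ^ m)) : Fin m → ZMod b :=
  fun p => ((i / b ^ (p : ℕ) % b : ℕ) : ZMod b)

lemma digitVector_bijective : Function.Bijective (digitVector (b := b) (m := m)) := by
  refine (Fintype.bijective_iff_injective_and_card _).mpr ⟨fun i i' h => ?_, by simp⟩
  apply finFunctionFinEquiv.symm.injective
  ext p
  have hp := congrArg ZMod.val (congrFun h p)
  simp only [digitVector, ZMod.val_natCast, Nat.mod_mod] at hp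
  simpa using hp

lemma card_filter_digitVector (p : (Fin m → ZMod b) → Prop) [DecidablePred p] :
    #{i : Fin (b ^ m) | p (digitVector i)} = #{x | p x} :=
  Finset.card_equiv (Equiv.ofBijective _ digitVector_bijective) (by simp)

variable (C : Fin s → Matrix (Fin m) (Fin m) (ZMod b))

lemma digitalNet_apply (i : Fin (b ^ m)) (ℓ : Fin s) :
    digitalNet b m s C i ℓ = digitValue (C ℓ *ᵥ digitVector i) := rfl

/-- The position `a` of the elementary `k`-interval `ElemInterval b s k a` containing the point
with digit vector `x`. -/
noncomputable def cellIndex (k : Fin s → ℕ) (x : Fin m → ZMod b) : Fin s → ℕ :=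
  fun j => ⌊(b : ℝ) ^ k j * digitValue (C j *ᵥ x)⌋₊

lemma cellIndex_eq_iff (k : Fin s → ℕ) (x x' : Fin m → ZMod b) :
    cellIndex C k x = cellIndex C k x' ↔ stackMatrix C k *ᵥ x = stackMatrix C k *ᵥ x' := by
  rw [stackMatrix_mulVec_eq_iff]
  simp only [funext_iff, cellIndex, floor_pow_mul_digitValue_eq_iff]

lemma cellIndex_lt (k : Fin s → ℕ) (x : Fin m → ZMod b) (j : Fin s) :
    cellIndex C k x j < b ^ k j := by
  rw [cellIndex, floor_pow_mul_digitValue]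
  exact digitPrefix_lt (digitSeq_lt _) _

lemma digitalNet_mem_elemInterval_iff (k a : Fin s → ℕ) (i : Fin (b ^ m)) :
    digitalNet b m s C i ∈ ElemInterval b s k a ↔ cellIndex C k (digitVector i) = a := by
  have hb : (0 : ℝ) < b := by exact_mod_cast (Fact.out : b.Prime).pos
  simp only [ElemInterval, Set.mem_ofPred_eq, funext_iff, cellIndex, digitalNet_apply]
  refine forall_congr' fun j => ?_
  rw [Nat.floor_eq_iff (by positivity [digitValue_nonneg (C j *ᵥ digitVector i)]),
    div_le_iff₀ (by positivity), lt_div_iff₀ (by positivity), mul_comm]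

lemma forall_le_gammaB_digitalNet_iff (k : Fin s → ℕ) (l j : Fin (b ^ m)) :
    (∀ r, (k r : ℕ∞) ≤ gammaB b (digitalNet b m s C l r) (digitalNet b m s C j r)) ↔
      stackMatrix C k *ᵥ digitVector l = stackMatrix C k *ᵥ digitVector j := by
  rw [stackMatrix_mulVec_eq_iff]
  refine forall_congr' fun r => ?_
  have h0 :=
    (intFloor_pow_mul_digitValue_eq_iff (C r *ᵥ digitVector l) (C r *ᵥ digitVector j) 0).mpr
      (by simp)
  rw [pow_zero, one_mul, one_mul] at h0
  rw [digitalNet_apply, digitalNet_apply, le_gammaB_iff (Fact.out : b.Prime).two_le h0,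
    intFloor_pow_mul_digitValue_eq_iff]

end DigitalNet

section Counting

variable {b m s : ℕ} [Fact b.Prime] (C : Fin s → Matrix (Fin m) (Fin m) (ZMod b))

lemma card_cellIndex_eq (k : Fin s → ℕ) (x₀ : Fin m → ZMod b) :
    #{x | cellIndex C k x = cellIndex C k x₀} = b ^ (m - (stackMatrix C k).rank) := by
  have h := card_mulVec_eq_mulVec (stackMatrix C k) x₀
  rw [ZMod.card, Fintype.card_fin] at h
  rw [← h]
  simp only [cellIndex_eq_iff]
  congr

lemma mB_digitalNet (k : Fin s → ℕ) (l : Fin (b ^ m)) :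
    mB b (digitalNet b m s C) k l = b ^ (m - (stackMatrix C k).rank) - 1 := by
  have hfilter : ({j | j ≠ l ∧ ∀ r, (k r : ℕ∞) ≤ gammaB b (digitalNet b m s C l r)
      (digitalNet b m s C j r)} : Finset (Fin (b ^ m)))
      = ({j | stackMatrix C k *ᵥ digitVector j = stackMatrix C k *ᵥ digitVector l} :
          Finset _).erase l := by
    ext j
    simp [forall_le_gammaB_digitalNet_iff, eq_comm]
  rw [mB, hfilter, card_erase_of_mem (by simp),
    card_filter_digitVector (fun x => stackMatrix C k *ᵥ x = stackMatrix C k *ᵥ digitVector l),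
    ← card_cellIndex_eq C k (digitVector l)]
  simp only [cellIndex_eq_iff]

lemma MB_digitalNet (k : Fin s → ℕ) :
    MB b (digitalNet b m s C) k = b ^ m * (b ^ (m - (stackMatrix C k).rank) - 1) := by
  simp [MB, mB_digitalNet]

lemma CB_digitalNet_le_one_iff (hm : 1 ≤ m) (k : Fin s → ℕ) :
    CB b (digitalNet b m s C) k ≤ 1 ↔ min (∑ j, k j) m ≤ (stackMatrix C k).rank := by
  have hb := (Fact.out : b.Prime).two_le
  have hbm : 2 ≤ b ^ m := hb.trans (Nat.le_self_pow (by omega) b)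
  have hρ : (stackMatrix C k).rank ≤ m := by
    simpa using Matrix.rank_le_card_width (stackMatrix C k)
  have hsub : ((b ^ m : ℕ) : ℝ) - 1 = ((b ^ m - 1 : ℕ) : ℝ) := by
    rw [Nat.cast_sub (by omega), Nat.cast_one]
  rw [← pow_mul_pow_sub_sub_one_le_pow_sub_one_iff hb hρ, CB, MB_digitalNet,
    div_le_one (by rw [hsub]; exact_mod_cast Nat.mul_pos (by omega) (by omega)), hsub]
  norm_cast
  rw [mul_left_comm]
  exact Nat.mul_le_mul_left_iff (by positivity)

lemma card_cellIndex_eq_le (k a : Fin s → ℕ) :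
    #{x | cellIndex C k x = a} ≤ b ^ (m - (stackMatrix C k).rank) := by
  by_cases ha : ∃ x₀, cellIndex C k x₀ = a
  · obtain ⟨x₀, rfl⟩ := ha
    exact (card_cellIndex_eq C k x₀).le
  · push Not at ha
    simp [ha]

lemma sum_card_cellIndex_eq (k : Fin s → ℕ) :
    ∑ a ∈ Fintype.piFinset fun j => range (b ^ k j), #{x | cellIndex C k x = a} = b ^ m := by
  rw [← card_eq_sum_card_fiberwise fun x _ => Fintype.mem_piFinset.mpr fun j =>
    mem_range.mpr (cellIndex_lt C k x j)]
  simp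

lemma kEquidistributed_digitalNet_iff {k : Fin s → ℕ} (hk : ∑ j, k j ≤ m) :
    kEquidistributed b m (digitalNet b m s C) k ↔ ∑ j, k j ≤ (stackMatrix C k).rank := by
  have hb := (Fact.out : b.Prime).two_le
  have hρ : (stackMatrix C k).rank ≤ ∑ j, k j := by
    simpa using Matrix.rank_le_card_height (stackMatrix C k)
  have hcount (a : Fin s → ℕ) : #{i | digitalNet b m s C i ∈ ElemInterval b s k a} =
      #{x | cellIndex C k x = a} := by
    simp only [digitalNet_mem_elemInterval_iff]
    exact card_filter_digitVector (fun x => cellIndex C k x = a)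
  simp only [kEquidistributed, hcount]
  constructor
  · intro h
    have h0 := h (cellIndex C k 0) (cellIndex_lt C k 0)
    rw [card_cellIndex_eq] at h0
    have := Nat.pow_right_injective hb h0
    omega
  · intro hK a ha
    have hle (a : Fin s → ℕ) : #{x | cellIndex C k x = a} ≤ b ^ (m - ∑ j, k j) := by
      simpa [show (stackMatrix C k).rank = ∑ j, k j by omega] using card_cellIndex_eq_le C k a
    refine (sum_eq_sum_iff_of_le fun a _ => hle a).mp ?_ a
      (Fintype.mem_piFinset.mpr fun j => mem_range.mpr (ha j))
    rw [sum_card_cellIndex_eq, sum_const, Fintype.card_piFinset]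
    simp [prod_pow_eq_pow_sum, ← pow_add, hk]

end Counting

theorem stmt11_general (b m s : ℕ) [Fact (Nat.Prime b)] (hm : 1 ≤ m)
    (C : Fin s → Matrix (Fin m) (Fin m) (ZMod b)) :
    (∀ k : Fin s → ℕ, CB b (digitalNet b m s C) k ≤ 1) ↔
      (∀ k : Fin s → ℕ, ∑ j, k j ≤ m → kEquidistributed b m (digitalNet b m s C) k) := by
  simp only [CB_digitalNet_le_one_iff C hm]
  constructor
  · intro h k hk
    rw [kEquidistributed_digitalNet_iff C hk]
    simpa [min_eq_left hk] using h k
  · intro h k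
    obtain ⟨k', hk'k, hk'⟩ := exists_le_sum_eq k (min_le_left (∑ j, k j) m)
    have hk'm : ∑ j, k' j ≤ m := hk' ▸ min_le_right _ _
    calc min (∑ j, k j) m = ∑ j, k' j := hk'.symm
      _ ≤ (stackMatrix C k').rank := (kEquidistributed_digitalNet_iff C hk'm).mp (h k' hk'm)
      _ ≤ (stackMatrix C k).rank := rank_stackMatrix_mono C hk'k

theorem stmt11 (b m s : ℕ) [Fact (Nat.Prime b)] (hm : 1 ≤ m)
    (C : Fin s → Matrix (Fin m) (Fin m) (ZMod b)) (hC : ∀ ℓ, IsUnit (C ℓ)) :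
    (∀ k : Fin s → ℕ, CB b (digitalNet b m s C) k ≤ 1) ↔
      (∀ k : Fin s → ℕ, ∑ j, k j ≤ m → kEquidistributed b m (digitalNet b m s C) k) :=
  stmt11_general b m s hm C
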